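/- Let H₁, H₂ be self-adjoint operators on ℓ²(F₁), ℓ²(F₂) for finite sets F₁, F₂, and E ∈ ℝ. Suppose that for every eigenvalue μ of H₂ and all x, y ∈ F₁, |G₁(x,y;E−μ)| ≤ a, where G₁ is the Green function of H₁ and E−μ is not an eigenvalue of H₁. Then for the Kronecker sum H = H₁ ⊗ I + I ⊗ H₂ and any points (u',u''), (y',y'') with E not an eigenvalue of H, |G((u',u''),(y',y'');E)| ≤ |F₂| · a. -/

import Mathlib

open scoped Matrix Kronecker

/-!
Writing `P j = ϕ j (ϕ j)ᴴ` for the rank-one projections onto the eigenvectors of `H₂`, we have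
`H₂ = ∑ μ j • P j` and `∑ P j = 1`, so `H - E = ∑ (H₁ - (E - μ j)) ⊗ P j`. Since the `P j` are
orthogonal idempotents, this is inverted termwise: `(H - E)⁻¹ = ∑ G₁(E - μ j) ⊗ P j`. Each entry
is then a sum of `|F₂|` terms `G₁(u', y'; E - μ j) · ϕ j u'' · conj (ϕ j y'')`, and the eigenvector
entries have modulus at most `1`.
-/

namespace Matrix

variable {R : Type*} [CommRing R] {ι l m n p : Type*}

theorem kronecker_sum [Fintype ι] (A : Matrix l m R) (B : ι → Matrix n p R) :
    A ⊗ₖ ∑ i, B i = ∑ i, A ⊗ₖ B i :=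
  map_sum (kroneckerBilinear (R := R) A) B Finset.univ

theorem sub_kronecker (A₁ A₂ : Matrix l m R) (B : Matrix n p R) :
    (A₁ - A₂) ⊗ₖ B = A₁ ⊗ₖ B - A₂ ⊗ₖ B :=
  LinearMap.map_sub₂ (kroneckerBilinear (R := R)) A₁ A₂ B

theorem kronecker_one_add_one_kronecker_sub_smul_one [Fintype ι] [DecidableEq m] [DecidableEq n]
    (A : Matrix m m R) (B : Matrix n n R) (c : ι → R) (P : ι → Matrix n n R)
    (hsum : ∑ i, P i = 1) (hB : B = ∑ i, c i • P i) (e : R) :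
    A ⊗ₖ 1 + 1 ⊗ₖ B - e • 1 = ∑ i, (A - (e - c i) • 1) ⊗ₖ P i := by
  have hterm : ∀ i, (A - (e - c i) • 1) ⊗ₖ P i = A ⊗ₖ P i - e • (1 ⊗ₖ P i) + 1 ⊗ₖ (c i • P i) :=
    fun i => by rw [sub_kronecker, sub_smul, sub_kronecker, smul_kronecker, smul_kronecker,
      kronecker_smul]; abel
  simp only [hterm, Finset.sum_add_distrib, Finset.sum_sub_distrib, ← Finset.smul_sum,
    ← kronecker_sum, hsum, ← hB, one_kronecker_one]
  abel

theorem inv_sum_kronecker [Fintype ι] [DecidableEq ι] [Fintype m] [DecidableEq m] [Fintype n]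
    [DecidableEq n] (A : ι → Matrix m m R) (P : ι → Matrix n n R) (hA : ∀ i, IsUnit (A i).det)
    (hP : ∀ i j, P i * P j = if i = j then P i else 0) (hsum : ∑ i, P i = 1) :
    (∑ i, A i ⊗ₖ P i)⁻¹ = ∑ i, (A i)⁻¹ ⊗ₖ P i := by
  refine inv_eq_right_inv ?_
  have hdiag : ∀ i, ∑ j, (A i * (A j)⁻¹) ⊗ₖ (P i * P j) = 1 ⊗ₖ P i := fun i => by
    simp only [hP, apply_ite, kronecker_zero, Finset.sum_ite_eq, Finset.mem_univ, if_true,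
      mul_nonsing_inv _ (hA i)]
  simp only [Finset.sum_mul_sum, ← mul_kronecker_mul, hdiag, ← kronecker_sum, hsum,
    one_kronecker_one]

section Orthonormal

variable [Fintype n] [StarRing R]

theorem vecMulVec_star_mul_vecMulVec_star [DecidableEq ι] {ϕ : ι → n → R}
    (hϕ : ∀ i j, star (ϕ i) ⬝ᵥ ϕ j = if i = j then 1 else 0) (i j : ι) :
    vecMulVec (ϕ i) (star (ϕ i)) * vecMulVec (ϕ j) (star (ϕ j)) =
      if i = j then vecMulVec (ϕ i) (star (ϕ i)) else 0 := by
  rw [vecMulVec_mul_vecMulVec, hϕ]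
  split_ifs with h
  · rw [h, one_smul]
  · rw [zero_smul]; ext; simp [vecMulVec_apply]

theorem sum_vecMulVec_star_eq_one [DecidableEq n] {ϕ : n → n → R}
    (hϕ : ∀ i j, star (ϕ i) ⬝ᵥ ϕ j = if i = j then 1 else 0) :
    ∑ i, vecMulVec (ϕ i) (star (ϕ i)) = 1 := by
  let U : Matrix n n R := of fun x i => ϕ i x
  have hU : Uᴴ * U = 1 := by
    ext i j
    simpa [U, mul_apply, one_apply, dotProduct] using hϕ i j
  rw [← mul_eq_one_comm.mp hU]
  ext x y
  simp [U, mul_apply, sum_apply, vecMulVec_apply]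

theorem eq_sum_smul_vecMulVec_star [DecidableEq n] {ϕ : n → n → R}
    (hϕ : ∀ i j, star (ϕ i) ⬝ᵥ ϕ j = if i = j then 1 else 0) (M : Matrix n n R) (c : n → R)
    (hM : ∀ i, M *ᵥ ϕ i = c i • ϕ i) :
    M = ∑ i, c i • vecMulVec (ϕ i) (star (ϕ i)) := by
  calc M = M * ∑ i, vecMulVec (ϕ i) (star (ϕ i)) := by rw [sum_vecMulVec_star_eq_one hϕ, mul_one]
    _ = ∑ i, c i • vecMulVec (ϕ i) (star (ϕ i)) := by
      simp only [Finset.mul_sum, mul_vecMulVec, hM, smul_vecMulVec]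

end Orthonormal

variable {𝕜 : Type*} [RCLike 𝕜]

theorem norm_apply_le_one_of_star_dotProduct_self_eq_one [Fintype n] {v : n → 𝕜}
    (hv : star v ⬝ᵥ v = 1) (x : n) : ‖v x‖ ≤ 1 := by
  have hinner : (‖WithLp.toLp 2 v‖ : 𝕜) ^ 2 = 1 := by
    rw [← inner_self_eq_norm_sq_to_K, EuclideanSpace.inner_toLp_toLp, dotProduct_comm, hv]
  have hnorm : ‖WithLp.toLp 2 v‖ = 1 :=
    (pow_eq_one_iff_of_nonneg (norm_nonneg _) two_ne_zero).mp (by exact_mod_cast hinner)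
  simpa [hnorm] using PiLp.norm_apply_le (WithLp.toLp 2 v) x

theorem norm_sum_kronecker_vecMulVec_star_apply_le [Fintype ι] [Fintype n] {ϕ : ι → n → 𝕜}
    (hϕ : ∀ i, star (ϕ i) ⬝ᵥ ϕ i = 1) (G : ι → Matrix m m 𝕜) {a : ℝ} {x' y' : m}
    (hG : ∀ i, ‖G i x' y'‖ ≤ a) (x'' y'' : n) :
    ‖(∑ i, G i ⊗ₖ vecMulVec (ϕ i) (star (ϕ i))) (x', x'') (y', y'')‖ ≤ Fintype.card ι * a := by
  have hϕ_le := fun i => norm_apply_le_one_of_star_dotProduct_self_eq_one (hϕ i)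
  calc ‖(∑ i, G i ⊗ₖ vecMulVec (ϕ i) (star (ϕ i))) (x', x'') (y', y'')‖
      = ‖∑ i, G i x' y' * (ϕ i x'' * star (ϕ i y''))‖ := by
        simp [sum_apply, vecMulVec_apply]
    _ ≤ ∑ i, ‖G i x' y'‖ * (‖ϕ i x''‖ * ‖ϕ i y''‖) := by
        refine (norm_sum_le _ _).trans_eq ?_
        simp only [norm_mul, norm_star]
    _ ≤ ∑ _i : ι, a := Finset.sum_le_sum fun i _ =>
        (mul_le_of_le_one_right (norm_nonneg _)
          (mul_le_one₀ (hϕ_le i x'') (norm_nonneg _) (hϕ_le i y''))).trans (hG i)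
    _ = Fintype.card ι * a := by simp

end Matrix

open Matrix

theorem kronecker_sum_green_function_bound_general
    {F₁ F₂ : Type*} [Fintype F₁] [DecidableEq F₁] [Fintype F₂] [DecidableEq F₂]
    (H₁ : Matrix F₁ F₁ ℂ) (H₂ : Matrix F₂ F₂ ℂ)
    (ϕ : F₂ → F₂ → ℂ) (μ : F₂ → ℝ)
    (heig : ∀ j, H₂.mulVec (ϕ j) = (μ j : ℂ) • ϕ j)
    (horth : ∀ j k, star (ϕ j) ⬝ᵥ ϕ k = if j = k then (1 : ℂ) else 0)
    (H : Matrix (F₁ × F₂) (F₁ × F₂) ℂ)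
    (hH : H = fun p q => H₁ p.1 q.1 * (if p.2 = q.2 then 1 else 0)
      + (if p.1 = q.1 then 1 else 0) * H₂ p.2 q.2)
    (E a : ℝ)
    (hinv₁ : ∀ j, IsUnit (H₁ - ((E : ℂ) - (μ j : ℂ)) • (1 : Matrix F₁ F₁ ℂ)))
    (hG₁ : ∀ j, ∀ x y : F₁,
      ‖(H₁ - ((E : ℂ) - (μ j : ℂ)) • (1 : Matrix F₁ F₁ ℂ))⁻¹ x y‖ ≤ a)
    (u' y' : F₁) (u'' y'' : F₂) :
    ‖(H - (E : ℂ) • (1 : Matrix (F₁ × F₂) (F₁ × F₂) ℂ))⁻¹ (u', u'') (y', y'')‖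
      ≤ (Fintype.card F₂ : ℝ) * a := by
  have hkron : H = H₁ ⊗ₖ 1 + 1 ⊗ₖ H₂ := by
    ext ⟨p₁, p₂⟩ ⟨q₁, q₂⟩
    simp [hH, one_apply]
  have hsum := sum_vecMulVec_star_eq_one horth
  rw [hkron, kronecker_one_add_one_kronecker_sub_smul_one H₁ H₂ _ _ hsum
      (eq_sum_smul_vecMulVec_star horth H₂ _ heig),
    inv_sum_kronecker _ _ (fun j => (isUnit_iff_isUnit_det _).mp (hinv₁ j))
      (vecMulVec_star_mul_vecMulVec_star horth) hsum]
  exact norm_sum_kronecker_vecMulVec_star_apply_le (fun j => by simpa using horth j j) _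
    (fun j => hG₁ j u' y') u'' y''

/-- Quantitative non-singularity for Kronecker sums: if every Green function of `H₁` at the
shifted energies `E − μ_j` is bounded by `a`, then the Green function of
`H = H₁ ⊗ I + I ⊗ H₂` at `E` is bounded by `|F₂| · a`. -/
theorem kronecker_sum_green_function_bound
    {F₁ F₂ : Type*} [Fintype F₁] [DecidableEq F₁] [Fintype F₂] [DecidableEq F₂]
    (H₁ : Matrix F₁ F₁ ℂ) (H₂ : Matrix F₂ F₂ ℂ)
    (hH₁ : H₁.IsHermitian) (hH₂ : H₂.IsHermitian)
    (ϕ : F₂ → F₂ → ℂ) (μ : F₂ → ℝ)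
    (heig : ∀ j, H₂.mulVec (ϕ j) = (μ j : ℂ) • ϕ j)
    (horth : ∀ j k, star (ϕ j) ⬝ᵥ ϕ k = if j = k then (1 : ℂ) else 0)
    (H : Matrix (F₁ × F₂) (F₁ × F₂) ℂ)
    (hH : H = fun p q => H₁ p.1 q.1 * (if p.2 = q.2 then 1 else 0)
      + (if p.1 = q.1 then 1 else 0) * H₂ p.2 q.2)
    (E a : ℝ) (ha : 0 ≤ a)
    (hinv : IsUnit (H - (E : ℂ) • (1 : Matrix (F₁ × F₂) (F₁ × F₂) ℂ)))
    (hinv₁ : ∀ j, IsUnit (H₁ - ((E : ℂ) - (μ j : ℂ)) • (1 : Matrix F₁ F₁ ℂ)))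
    (hG₁ : ∀ j, ∀ x y : F₁,
      ‖(H₁ - ((E : ℂ) - (μ j : ℂ)) • (1 : Matrix F₁ F₁ ℂ))⁻¹ x y‖ ≤ a)
    (u' y' : F₁) (u'' y'' : F₂) :
    ‖(H - (E : ℂ) • (1 : Matrix (F₁ × F₂) (F₁ × F₂) ℂ))⁻¹ (u', u'') (y', y'')‖
      ≤ (Fintype.card F₂ : ℝ) * a :=
  kronecker_sum_green_function_bound_general H₁ H₂ ϕ μ heig horth H hH E a hinv₁ hG₁ u' y' u'' y''
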